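/- arXiv:math/0701307 — 4 statements merged into one kernel-verified Lean document; each statement's English description precedes it below -/
import Mathlib

section
/- Let μ and μ* be finite positive Borel measures on [-1,1] with μ ≤ μ*. Then for all x, y ∈ [-1,1], |K_n(x,y) - K_n*(x,y)| ≤ K_n(y,y)^{1/2} · (K_n(x,x) - K_n*(x,x))^{1/2}, where K_n and K_n* are the reproducing kernels of μ and μ* respectively. -/
open MeasureTheory Set Finset

/-- The reproducing kernel built from orthonormal polynomials. -/
noncomputable def kern (p : ℕ → Polynomial ℝ) (n : ℕ) (x y : ℝ) : ℝ :=
  ∑ k ∈ Finset.range n, (p k).eval x * (p k).eval y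

lemma integrable_eval_mul (ν : MeasureTheory.Measure ℝ) [IsFiniteMeasure ν]
    (q r : Polynomial ℝ) :
    Integrable (fun t => q.eval t * r.eval t) (ν.restrict (Icc (-1:ℝ) 1)) :=
  (q.continuous.mul r.continuous).integrableOn_Icc

/-- Any polynomial of small degree lies in the span of `p 0, ..., p (n-1)`. -/
lemma span_of_natDegree_lt (p : ℕ → Polynomial ℝ) (hdeg : ∀ k, (p k).natDegree = k)
    (h0 : p 0 ≠ 0) (n : ℕ) :
    ∀ m (q : Polynomial ℝ), q.natDegree ≤ m → q.natDegree < n →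
      q ∈ Submodule.span ℝ (Set.range fun k : Fin n => p k) := by
  intro m
  induction m with
  | zero =>
    intro q hq hqn
    have h0n : 0 < n := lt_of_le_of_lt (Nat.zero_le _) hqn
    have hp0 : p 0 = Polynomial.C ((p 0).coeff 0) :=
      Polynomial.eq_C_of_natDegree_le_zero (le_of_eq (hdeg 0))
    obtain ⟨d, hd⟩ : ∃ d, p 0 = Polynomial.C d := ⟨_, hp0⟩
    have hdne : d ≠ 0 := by
      intro h; apply h0; rw [hd, h, map_zero]
    have hqe : q = (q.coeff 0 / d) • p 0 := by
      rw [hd, Polynomial.smul_C, smul_eq_mul, div_mul_cancel₀ _ hdne]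
      exact Polynomial.eq_C_of_natDegree_le_zero hq
    rw [hqe]
    exact Submodule.smul_mem _ _ (Submodule.subset_span ⟨⟨0, h0n⟩, rfl⟩)
  | succ m ih =>
    intro q hq hqn
    by_cases hm : q.natDegree ≤ m
    · exact ih q hm hqn
    · have hqd : q.natDegree = m + 1 := le_antisymm hq (not_le.1 hm)
      have hqne : q ≠ 0 := by
        intro h; apply hm; rw [h]; simp
      have hpne : p (m+1) ≠ 0 := by
        intro h
        have := hdeg (m+1); rw [h] at this; simp at this
      have hlc : (p (m+1)).leadingCoeff ≠ 0 := Polynomial.leadingCoeff_ne_zero.2 hpne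
      have hqlc : q.leadingCoeff ≠ 0 := Polynomial.leadingCoeff_ne_zero.2 hqne
      set c : ℝ := q.leadingCoeff / (p (m+1)).leadingCoeff with hcdef
      have hcne : c ≠ 0 := div_ne_zero hqlc hlc
      have hsm : c • p (m+1) = Polynomial.C c * p (m+1) := Polynomial.smul_eq_C_mul c
      have hdq : (c • p (m+1)).degree = q.degree := by
        rw [hsm, Polynomial.degree_C_mul hcne, Polynomial.degree_eq_natDegree hpne,
          Polynomial.degree_eq_natDegree hqne, hdeg, hqd]
      have hlceq : q.leadingCoeff = (c • p (m+1)).leadingCoeff := by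
        rw [hsm, Polynomial.leadingCoeff_mul, Polynomial.leadingCoeff_C,
          hcdef, div_mul_cancel₀ _ hlc]
      have hdlt : (q - c • p (m+1)).degree < q.degree :=
        Polynomial.degree_sub_lt hdq.symm hqne hlceq
      have hm1n : m + 1 < n := by omega
      have hnd : (q - c • p (m+1)).natDegree ≤ m := by
        by_cases hr : q - c • p (m+1) = 0
        · simp [hr]
        · have h5 : (q - c • p (m+1)).degree < ((m + 1 : ℕ) : WithBot ℕ) :=
            hdlt.trans_le (le_of_eq (by rw [Polynomial.degree_eq_natDegree hqne, hqd]))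
          have := (Polynomial.natDegree_lt_iff_degree_lt hr).2 h5
          omega
      have hmem1 : q - c • p (m+1) ∈ Submodule.span ℝ (Set.range fun k : Fin n => p k) :=
        ih _ hnd (lt_of_le_of_lt hnd (by omega))
      have hmem2 : c • p (m+1) ∈ Submodule.span ℝ (Set.range fun k : Fin n => p k) :=
        Submodule.smul_mem _ _ (Submodule.subset_span ⟨⟨m+1, hm1n⟩, rfl⟩)
      have : q = (q - c • p (m+1)) + c • p (m+1) := by ring
      rw [this]
      exact Submodule.add_mem _ hmem1 hmem2

/-- Integral of a product of two expansions in an orthonormal family. -/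
lemma integral_sum_mul_sum (ν : MeasureTheory.Measure ℝ) (p : ℕ → Polynomial ℝ)
    (horth : ∀ j k, (∫ t, (p j).eval t * (p k).eval t ∂ν) = if j = k then 1 else 0)
    (hint : ∀ q r : Polynomial ℝ, Integrable (fun t => q.eval t * r.eval t) ν)
    (n : ℕ) (a b : ℕ → ℝ) :
    (∫ t, (∑ j ∈ Finset.range n, a j * (p j).eval t) *
        (∑ k ∈ Finset.range n, b k * (p k).eval t) ∂ν)
      = ∑ k ∈ Finset.range n, a k * b k := by
  have key : ∀ t : ℝ, (∑ j ∈ Finset.range n, a j * (p j).eval t) *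
      (∑ k ∈ Finset.range n, b k * (p k).eval t)
      = ∑ j ∈ Finset.range n, ∑ k ∈ Finset.range n,
          (a j * b k) * ((p j).eval t * (p k).eval t) := by
    intro t
    rw [Finset.sum_mul_sum]
    exact Finset.sum_congr rfl fun j _ => Finset.sum_congr rfl fun k _ => by ring
  simp_rw [key]
  rw [integral_finset_sum _ (fun j _ =>
    integrable_finset_sum _ (fun k _ => (hint (p j) (p k)).const_mul _))]
  have inner : ∀ j, (∫ t, ∑ k ∈ Finset.range n,
      (a j * b k) * ((p j).eval t * (p k).eval t) ∂ν)
      = ∑ k ∈ Finset.range n, (a j * b k) * (if j = k then 1 else 0) := by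
    intro j
    rw [integral_finset_sum _ (fun k _ => (hint (p j) (p k)).const_mul _)]
    exact Finset.sum_congr rfl fun k _ => by rw [integral_const_mul, horth]
  simp_rw [inner]
  apply Finset.sum_congr rfl
  intro j hj
  simp only [mul_ite, mul_one, mul_zero]
  rw [Finset.sum_ite_eq]
  simp [hj]

/-- The fundamental localization inequality: if `μ ≤ μ*` then
`|K_n(x,y) - K_n*(x,y)| ≤ K_n(y,y)^{1/2} (K_n(x,x) - K_n*(x,x))^{1/2}`. -/
theorem localization_inequality
    (μ μs : Measure ℝ) [IsFiniteMeasure μ] [IsFiniteMeasure μs]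
    (hle : μ ≤ μs) (n : ℕ) (p ps : ℕ → Polynomial ℝ)
    (hdeg : ∀ k, (p k).natDegree = k) (hdegs : ∀ k, (ps k).natDegree = k)
    (horth : ∀ j k, (∫ t in Icc (-1:ℝ) 1, (p j).eval t * (p k).eval t ∂μ)
        = if j = k then 1 else 0)
    (horths : ∀ j k, (∫ t in Icc (-1:ℝ) 1, (ps j).eval t * (ps k).eval t ∂μs)
        = if j = k then 1 else 0)
    (x y : ℝ) (hx : x ∈ Icc (-1:ℝ) 1) (hy : y ∈ Icc (-1:ℝ) 1) :
    |kern p n x y - kern ps n x y| ≤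
      Real.sqrt (kern p n y y) * Real.sqrt (kern p n x x - kern ps n x x) := by
  rcases Nat.eq_zero_or_pos n with hn | hn
  · subst hn; simp [kern]
  have hint : ∀ q r : Polynomial ℝ,
      Integrable (fun t => q.eval t * r.eval t) (μ.restrict (Icc (-1:ℝ) 1)) :=
    integrable_eval_mul μ
  have hints : ∀ q r : Polynomial ℝ,
      Integrable (fun t => q.eval t * r.eval t) (μs.restrict (Icc (-1:ℝ) 1)) :=
    integrable_eval_mul μs
  have hp0 : p 0 ≠ 0 := by
    intro h
    have h00 := horth 0 0
    rw [h] at h00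
    simp at h00
  -- the kernel polynomials in the variable `t`, with `x` fixed
  set Kp : Polynomial ℝ := ∑ k ∈ Finset.range n, ((p k).eval x) • p k with hKp
  set Ks : Polynomial ℝ := ∑ k ∈ Finset.range n, ((ps k).eval x) • ps k with hKs
  set f : Polynomial ℝ := Kp - Ks with hfdef
  have heval : ∀ (a : ℕ → ℝ) (qq : ℕ → Polynomial ℝ) (t : ℝ),
      Polynomial.eval t (∑ k ∈ Finset.range n, a k • qq k)
        = ∑ k ∈ Finset.range n, a k * (qq k).eval t := by
    intro a qq t
    rw [Polynomial.eval_finset_sum]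
    exact Finset.sum_congr rfl fun k _ => by
      rw [Polynomial.smul_eq_C_mul, Polynomial.eval_mul, Polynomial.eval_C]
  -- degree bound of f
  have hdegsum : ∀ (a : ℕ → ℝ) (qq : ℕ → Polynomial ℝ), (∀ k, (qq k).natDegree = k) →
      (∑ k ∈ Finset.range n, a k • qq k).natDegree ≤ n - 1 := by
    intro a qq hq
    apply Polynomial.natDegree_sum_le_of_forall_le
    intro k hk
    calc (a k • qq k).natDegree ≤ (qq k).natDegree := Polynomial.natDegree_smul_le _ _
      _ = k := hq k
      _ ≤ n - 1 := Nat.le_sub_one_of_lt (Finset.mem_range.1 hk)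
  have hfdeg : f.natDegree < n := by
    have h3 : f.natDegree ≤ n - 1 :=
      le_trans (Polynomial.natDegree_sub_le _ _)
        (max_le (hdegsum _ _ hdeg) (hdegsum _ _ hdegs))
    exact lt_of_le_of_lt h3 (Nat.sub_lt hn one_pos)
  -- expand f in the basis p 0, ..., p (n-1)
  obtain ⟨lamF, hlam⟩ := (Submodule.mem_span_range_iff_exists_fun ℝ).1
    (span_of_natDegree_lt p hdeg hp0 n f.natDegree f le_rfl hfdeg)
  set L : ℕ → ℝ := fun k => if h : k < n then lamF ⟨k, h⟩ else 0 with hL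
  have hfL : f = ∑ k ∈ Finset.range n, L k • p k := by
    rw [← hlam, ← Fin.sum_univ_eq_sum_range (fun k => L k • p k) n]
    exact Finset.sum_congr rfl fun i _ => by simp [hL, i.isLt]
  set c : ℕ → ℝ := fun k => (p k).eval x - L k with hc
  have hKsL : Ks = ∑ k ∈ Finset.range n, c k • p k := by
    have h1 : Ks = Kp - f := by rw [hfdef]; ring
    rw [h1, hKp, hfL, ← Finset.sum_sub_distrib]
    exact Finset.sum_congr rfl fun k _ => by rw [← sub_smul]
  -- pointwise evaluations
  have hfev : ∀ t, f.eval t = ∑ k ∈ Finset.range n, L k * (p k).eval t :=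
    fun t => by rw [hfL]; exact heval _ _ t
  have hKsev : ∀ t, Ks.eval t = ∑ k ∈ Finset.range n, c k * (p k).eval t :=
    fun t => by rw [hKsL]; exact heval _ _ t
  have hKsev' : ∀ t, Ks.eval t = ∑ k ∈ Finset.range n, (ps k).eval x * (ps k).eval t :=
    fun t => by rw [hKs]; exact heval _ _ t
  -- ∫ Ks² dμ = Σ c², ∫ Ks² dμ* = kern ps n x x
  have hKs2 : (∫ t in Icc (-1:ℝ) 1, Ks.eval t * Ks.eval t ∂μ)
      = ∑ k ∈ Finset.range n, c k * c k := by
    simp_rw [hKsev]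
    exact integral_sum_mul_sum _ p horth hint n c c
  have hKs2s : (∫ t in Icc (-1:ℝ) 1, Ks.eval t * Ks.eval t ∂μs)
      = kern ps n x x := by
    simp_rw [hKsev']
    exact integral_sum_mul_sum _ ps horths hints n _ _
  have hmono : (∫ t in Icc (-1:ℝ) 1, Ks.eval t * Ks.eval t ∂μ)
      ≤ ∫ t in Icc (-1:ℝ) 1, Ks.eval t * Ks.eval t ∂μs :=
    integral_mono_measure (Measure.restrict_mono_measure hle _)
      (Filter.Eventually.of_forall fun t => mul_self_nonneg _) (hints Ks Ks)
  have E4 : ∑ k ∈ Finset.range n, c k * c k ≤ kern ps n x x := by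
    rw [← hKs2, ← hKs2s]; exact hmono
  -- reproducing: Σ (p k).eval x * c k = Ks.eval x = kern ps n x x
  have E1 : ∑ k ∈ Finset.range n, (p k).eval x * c k = kern ps n x x := by
    have h1 := hKsev x
    have h2 := hKsev' x
    rw [h1] at h2
    unfold kern
    rw [← h2]
    exact Finset.sum_congr rfl fun k _ => mul_comm _ _
  -- S ≤ D
  have expand : ∑ k ∈ Finset.range n, L k * L k
      = (∑ k ∈ Finset.range n, (p k).eval x * (p k).eval x)
        - 2 * (∑ k ∈ Finset.range n, (p k).eval x * c k)
        + ∑ k ∈ Finset.range n, c k * c k := by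
    rw [Finset.mul_sum, ← Finset.sum_sub_distrib, ← Finset.sum_add_distrib]
    apply Finset.sum_congr rfl
    intro k _
    have hLk : L k = (p k).eval x - c k := by rw [hc]; ring
    rw [hLk]; ring
  have hSD : ∑ k ∈ Finset.range n, L k * L k ≤ kern p n x x - kern ps n x x := by
    have hkxx : kern p n x x = ∑ k ∈ Finset.range n, (p k).eval x * (p k).eval x := rfl
    rw [expand, E1, hkxx]
    linarith [E4]
  -- value of the difference at y
  have hval : kern p n x y - kern ps n x y = ∑ k ∈ Finset.range n, L k * (p k).eval y := by
    rw [← hfev y, hfdef, Polynomial.eval_sub, hKp, hKs, heval, heval]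
    rfl
  -- Cauchy-Schwarz
  have cs : |∑ k ∈ Finset.range n, L k * (p k).eval y|
      ≤ Real.sqrt (∑ k ∈ Finset.range n, ((p k).eval y) ^ 2)
        * Real.sqrt (∑ k ∈ Finset.range n, (L k) ^ 2) := by
    rw [abs_le]
    constructor
    · have h2 := Real.sum_mul_le_sqrt_mul_sqrt (Finset.range n)
        (fun k => -((p k).eval y)) (fun k => L k)
      simp only [neg_mul, neg_sq, Finset.sum_neg_distrib] at h2
      have h3 : ∑ k ∈ Finset.range n, L k * (p k).eval y
          = ∑ k ∈ Finset.range n, (p k).eval y * L k :=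
        Finset.sum_congr rfl fun k _ => mul_comm _ _
      rw [h3]
      linarith
    · have h := Real.sum_mul_le_sqrt_mul_sqrt (Finset.range n)
        (fun k => (p k).eval y) (fun k => L k)
      have h3 : ∑ k ∈ Finset.range n, L k * (p k).eval y
          = ∑ k ∈ Finset.range n, (p k).eval y * L k :=
        Finset.sum_congr rfl fun k _ => mul_comm _ _
      rw [h3]
      exact h
  -- put everything together
  have hky : kern p n y y = ∑ k ∈ Finset.range n, ((p k).eval y) ^ 2 := by
    unfold kern
    exact Finset.sum_congr rfl fun k _ => (sq _).symm
  have hLsq : ∑ k ∈ Finset.range n, (L k) ^ 2 = ∑ k ∈ Finset.range n, L k * L k :=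
    Finset.sum_congr rfl fun k _ => sq _
  rw [hval, hky]
  calc |∑ k ∈ Finset.range n, L k * (p k).eval y|
      ≤ Real.sqrt (∑ k ∈ Finset.range n, ((p k).eval y) ^ 2)
        * Real.sqrt (∑ k ∈ Finset.range n, (L k) ^ 2) := cs
    _ ≤ Real.sqrt (∑ k ∈ Finset.range n, ((p k).eval y) ^ 2)
        * Real.sqrt (kern p n x x - kern ps n x x) := by
        apply mul_le_mul_of_nonneg_left _ (Real.sqrt_nonneg _)
        apply Real.sqrt_le_sqrt
        rw [hLsq]
        exact hSD
end

section
/- Let μ and μ* be finite positive Borel measures on [-1,1] with μ ≤ μ* and both with K_n(x,x), K_n*(x,x) > 0. Then for all x, y ∈ [-1,1], |K_n(x,y) - K_n*(x,y)| / K_n(x,x) ≤ (λ_n(x)/λ_n(y))^{1/2} · (1 - λ_n(x)/λ_n*(x))^{1/2}, where λ_n, λ_n* are the Christoffel functions of μ, μ*. -/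
open MeasureTheory Set Finset

private lemma intg_poly_mul (f g : Polynomial ℝ) (ν : Measure ℝ) [IsFiniteMeasure ν] :
    IntegrableOn (fun t => f.eval t * g.eval t) (Icc (-1:ℝ) 1) ν :=
  (f.continuous.mul g.continuous).integrableOn_Icc

/-- Expansion of the integral of a product of two combinations of orthonormal polynomials. -/
private lemma ortho_expand (ν : Measure ℝ) [IsFiniteMeasure ν] (P : ℕ → Polynomial ℝ)
    (hor : ∀ j k, (∫ t in Icc (-1:ℝ) 1, (P j).eval t * (P k).eval t ∂ν)
        = if j = k then 1 else 0)
    (n : ℕ) (a b : ℕ → ℝ) :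
    (∫ t in Icc (-1:ℝ) 1,
        (∑ k ∈ Finset.range n, a k * (P k).eval t) * (∑ j ∈ Finset.range n, b j * (P j).eval t) ∂ν)
      = ∑ k ∈ Finset.range n, a k * b k := by
  have hpt : ∀ t : ℝ, (∑ k ∈ Finset.range n, a k * (P k).eval t) *
      (∑ j ∈ Finset.range n, b j * (P j).eval t)
      = ∑ k ∈ Finset.range n, ∑ j ∈ Finset.range n,
          (a k * b j) * ((P k).eval t * (P j).eval t) := by
    intro t
    rw [Finset.sum_mul_sum]
    refine Finset.sum_congr rfl fun k _ => Finset.sum_congr rfl fun j _ => by ring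
  simp only [hpt]
  rw [integral_finset_sum _ (fun k _ => integrable_finset_sum _
      (fun j _ => ((intg_poly_mul (P k) (P j) ν).const_mul _)))]
  refine Finset.sum_congr rfl fun k hk => ?_
  rw [integral_finset_sum _ (fun j _ => ((intg_poly_mul (P k) (P j) ν).const_mul _))]
  have hterm : ∀ j ∈ Finset.range n,
      (∫ t in Icc (-1:ℝ) 1, (a k * b j) * ((P k).eval t * (P j).eval t) ∂ν)
        = if k = j then a k * b j else 0 := by
    intro j _
    rw [integral_const_mul, hor k j]
    split <;> simp
  rw [Finset.sum_congr rfl hterm, Finset.sum_ite_eq (Finset.range n) k (fun j => a k * b j)]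
  simp [Finset.mem_range.mp hk]

/-- Any polynomial of degree ≤ m is a combination of `p 0, …, p m`. -/
private lemma rep_lemma (p : ℕ → Polynomial ℝ) (hdeg : ∀ k, (p k).natDegree = k)
    (hnz : ∀ k, p k ≠ 0) :
    ∀ (m : ℕ) (q : Polynomial ℝ), q.natDegree ≤ m →
      ∃ d : ℕ → ℝ, q = ∑ i ∈ Finset.range (m+1), Polynomial.C (d i) * p i := by
  intro m
  induction m with
  | zero =>
    intro q hq
    have h0 : p 0 = Polynomial.C ((p 0).coeff 0) :=
      Polynomial.eq_C_of_natDegree_le_zero (le_of_eq (hdeg 0))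
    have ha : (p 0).coeff 0 ≠ 0 := by
      intro h; exact hnz 0 (by rw [h0, h, map_zero])
    refine ⟨fun _ => q.coeff 0 / (p 0).coeff 0, ?_⟩
    rw [Finset.sum_range_one, h0]
    simp only [Polynomial.coeff_C_zero]
    rw [← map_mul, div_mul_cancel₀ _ ha]
    exact Polynomial.eq_C_of_natDegree_le_zero hq
  | succ m ih =>
    intro q hq
    set a := (p (m+1)).coeff (m+1) with ha_def
    have ha : a ≠ 0 := by
      have : (p (m+1)).leadingCoeff ≠ 0 := Polynomial.leadingCoeff_ne_zero.mpr (hnz (m+1))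
      rwa [Polynomial.leadingCoeff, hdeg (m+1)] at this
    set c := q.coeff (m+1) / a with hc_def
    set q' := q - Polynomial.C c * p (m+1) with hq'_def
    have hq' : q'.natDegree ≤ m := by
      rw [Polynomial.natDegree_le_iff_coeff_eq_zero]
      intro j hj
      have hj' : m + 1 ≤ j := hj
      rcases eq_or_lt_of_le hj' with h | h
      · simp only [hq'_def, Polynomial.coeff_sub, Polynomial.coeff_C_mul, ← h]
        rw [← ha_def, hc_def, div_mul_cancel₀ _ ha, sub_self]
      · have h1 : q.coeff j = 0 :=
          Polynomial.coeff_eq_zero_of_natDegree_lt (lt_of_le_of_lt hq h)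
        have h2 : (p (m+1)).coeff j = 0 :=
          Polynomial.coeff_eq_zero_of_natDegree_lt (by rw [hdeg (m+1)]; exact h)
        simp [hq'_def, h1, h2]
    obtain ⟨d, hd⟩ := ih q' hq'
    refine ⟨fun i => if i = m+1 then c else d i, ?_⟩
    rw [Finset.sum_range_succ]
    have hrw : ∑ i ∈ Finset.range (m+1),
        Polynomial.C (if i = m+1 then c else d i) * p i
        = ∑ i ∈ Finset.range (m+1), Polynomial.C (d i) * p i := by
      refine Finset.sum_congr rfl fun i hi => ?_
      have : i ≠ m + 1 := Nat.ne_of_lt (Finset.mem_range.mp hi)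
      simp [this]
    rw [hrw, ← hd]
    simp [hq'_def]

/-- The localization inequality in terms of Christoffel functions `λ_n = 1/K_n(x,x)`:
`|K_n(x,y) - K_n*(x,y)|/K_n(x,x) ≤ (λ_n(x)/λ_n(y))^{1/2} (1 - λ_n(x)/λ_n*(x))^{1/2}`. -/
theorem localization_inequality_christoffel
    (μ μs : Measure ℝ) [IsFiniteMeasure μ] [IsFiniteMeasure μs]
    (hle : μ ≤ μs) (n : ℕ) (p ps : ℕ → Polynomial ℝ)
    (hdeg : ∀ k, (p k).natDegree = k) (hdegs : ∀ k, (ps k).natDegree = k)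
    (horth : ∀ j k, (∫ t in Icc (-1:ℝ) 1, (p j).eval t * (p k).eval t ∂μ)
        = if j = k then 1 else 0)
    (horths : ∀ j k, (∫ t in Icc (-1:ℝ) 1, (ps j).eval t * (ps k).eval t ∂μs)
        = if j = k then 1 else 0)
    (hpos : ∀ z ∈ Icc (-1:ℝ) 1, 0 < kern p n z z ∧ 0 < kern ps n z z)
    (x y : ℝ) (hx : x ∈ Icc (-1:ℝ) 1) (hy : y ∈ Icc (-1:ℝ) 1) :
    |kern p n x y - kern ps n x y| / kern p n x x ≤
      Real.sqrt ((1 / kern p n x x) / (1 / kern p n y y)) *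
        Real.sqrt (1 - (1 / kern p n x x) / (1 / kern ps n x x)) := by
  obtain ⟨hA, hAs⟩ := hpos x hx
  obtain ⟨hB, -⟩ := hpos y hy
  -- the p k are nonzero
  have hnz : ∀ k, p k ≠ 0 := by
    intro k hk0
    have h := horth k k
    rw [hk0] at h
    simp at h
  -- representation of ps m in the p basis
  have hrepn : ∀ m, ∃ d : ℕ → ℝ, m < n →
      ps m = ∑ i ∈ Finset.range n, Polynomial.C (d i) * p i := by
    intro m
    by_cases hm : m < n
    · obtain ⟨d, hd⟩ := rep_lemma p hdeg hnz m (ps m) (le_of_eq (hdegs m))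
      refine ⟨fun i => if i < m+1 then d i else 0, fun _ => ?_⟩
      rw [hd, ← Finset.sum_subset (Finset.range_subset_range.mpr hm)
        (fun i _ hi => by
          have h' : ¬ i < m + 1 := fun h => hi (Finset.mem_range.mpr h)
          simp [h'])]
      · refine Finset.sum_congr rfl fun i hi => ?_
        simp [Finset.mem_range.mp hi]
    · exact ⟨0, fun h => absurd h hm⟩
  choose D hD using hrepn
  have hps_eval : ∀ m ∈ Finset.range n, ∀ t : ℝ,
      (ps m).eval t = ∑ k ∈ Finset.range n, D m k * (p k).eval t := by
    intro m hm t
    conv_lhs => rw [hD m (Finset.mem_range.mp hm)]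
    simp [Polynomial.eval_finset_sum]
  set s : ℕ → ℝ := fun k => ∑ m ∈ Finset.range n, (ps m).eval x * D m k with hs_def
  set e : ℕ → ℝ := fun k => (p k).eval x - s k with he_def
  -- kernel expansion in the p basis
  have hker : ∀ t : ℝ, kern ps n x t = ∑ k ∈ Finset.range n, s k * (p k).eval t := by
    intro t
    show (∑ m ∈ Finset.range n, (ps m).eval x * (ps m).eval t) = _
    calc ∑ m ∈ Finset.range n, (ps m).eval x * (ps m).eval t
        = ∑ m ∈ Finset.range n, ∑ k ∈ Finset.range n,
            ((ps m).eval x * D m k) * (p k).eval t := by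
          refine Finset.sum_congr rfl fun m hm => ?_
          rw [hps_eval m hm t, Finset.mul_sum]
          exact Finset.sum_congr rfl fun k _ => by ring
      _ = ∑ k ∈ Finset.range n, s k * (p k).eval t := by
          rw [Finset.sum_comm]
          exact Finset.sum_congr rfl fun k _ => by rw [hs_def, Finset.sum_mul]
  have hdiff : ∀ t : ℝ, kern p n x t - kern ps n x t
      = ∑ k ∈ Finset.range n, e k * (p k).eval t := by
    intro t
    rw [hker t]
    show (∑ k ∈ Finset.range n, (p k).eval x * (p k).eval t) - _ = _
    rw [← Finset.sum_sub_distrib]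
    exact Finset.sum_congr rfl fun k _ => by rw [he_def]; ring
  have hsx : ∑ k ∈ Finset.range n, (p k).eval x * s k = kern ps n x x := by
    calc ∑ k ∈ Finset.range n, (p k).eval x * s k
        = ∑ k ∈ Finset.range n, ∑ m ∈ Finset.range n,
            (ps m).eval x * (D m k * (p k).eval x) := by
          refine Finset.sum_congr rfl fun k _ => ?_
          show (p k).eval x * (∑ m ∈ Finset.range n, (ps m).eval x * D m k) = _
          rw [Finset.mul_sum]
          exact Finset.sum_congr rfl fun m _ => by ring
      _ = ∑ m ∈ Finset.range n, (ps m).eval x * (ps m).eval x := by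
          rw [Finset.sum_comm]
          refine Finset.sum_congr rfl fun m hm => ?_
          rw [← Finset.mul_sum, ← hps_eval m hm x]
      _ = kern ps n x x := rfl
  -- ∑ s² equals ∫ (K*)² dμ, bounded by ∫ (K*)² dμ* = K*(x,x)
  have hcont : Continuous fun t => kern ps n x t := by
    unfold kern
    exact continuous_finset_sum _ fun k _ => continuous_const.mul (ps k).continuous
  have hseq : (∫ t in Icc (-1:ℝ) 1, kern ps n x t * kern ps n x t ∂μ)
      = ∑ k ∈ Finset.range n, s k * s k := by
    simp only [hker]
    exact ortho_expand μ p horth n s s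
  have hstar : (∫ t in Icc (-1:ℝ) 1, kern ps n x t * kern ps n x t ∂μs)
      = kern ps n x x := by
    show (∫ t in Icc (-1:ℝ) 1,
        (∑ k ∈ Finset.range n, (ps k).eval x * (ps k).eval t) *
        (∑ j ∈ Finset.range n, (ps j).eval x * (ps j).eval t) ∂μs) = _
    rw [ortho_expand μs ps horths n _ _]
    rfl
  have hmono : (∫ t in Icc (-1:ℝ) 1, kern ps n x t * kern ps n x t ∂μ)
      ≤ ∫ t in Icc (-1:ℝ) 1, kern ps n x t * kern ps n x t ∂μs := by
    refine integral_mono_measure (Measure.restrict_mono (subset_refl _) hle)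
      (Filter.Eventually.of_forall fun t => mul_self_nonneg _) ?_
    exact (hcont.mul hcont).integrableOn_Icc
  have hsumsq : ∑ k ∈ Finset.range n, s k * s k ≤ kern ps n x x := by
    rw [← hseq, ← hstar]; exact hmono
  have hesum : ∑ k ∈ Finset.range n, e k * e k
      = kern p n x x - 2 * kern ps n x x + ∑ k ∈ Finset.range n, s k * s k := by
    have h1 : ∑ k ∈ Finset.range n, e k * e k
        = (∑ k ∈ Finset.range n, (p k).eval x * (p k).eval x)
          - 2 * (∑ k ∈ Finset.range n, (p k).eval x * s k)
          + ∑ k ∈ Finset.range n, s k * s k := by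
      rw [Finset.mul_sum, ← Finset.sum_sub_distrib, ← Finset.sum_add_distrib]
      exact Finset.sum_congr rfl fun k _ => by rw [he_def]; ring
    rw [h1, hsx]
    rfl
  have heA : ∑ k ∈ Finset.range n, e k * e k ≤ kern p n x x - kern ps n x x := by
    rw [hesum]; linarith
  have hAsA : kern ps n x x ≤ kern p n x x := by
    have h0 : (0:ℝ) ≤ ∑ k ∈ Finset.range n, e k * e k :=
      Finset.sum_nonneg fun k _ => mul_self_nonneg _
    linarith
  -- Cauchy–Schwarz
  have hCS : (∑ k ∈ Finset.range n, e k * (p k).eval y) ^ 2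
      ≤ (∑ k ∈ Finset.range n, e k * e k) * kern p n y y := by
    have := Finset.sum_mul_sq_le_sq_mul_sq (Finset.range n) e (fun k => (p k).eval y)
    calc (∑ k ∈ Finset.range n, e k * (p k).eval y) ^ 2
        ≤ (∑ k ∈ Finset.range n, e k ^ 2) * ∑ k ∈ Finset.range n, (p k).eval y ^ 2 := this
      _ = (∑ k ∈ Finset.range n, e k * e k) * kern p n y y := by
          unfold kern
          congr 1 <;> exact Finset.sum_congr rfl fun k _ => by ring
  set A := kern p n x x
  set B := kern p n y y
  set As := kern ps n x x
  have hq2 : (kern p n x y - kern ps n x y) ^ 2 ≤ (A - As) * B := by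
    rw [hdiff y]
    calc (∑ k ∈ Finset.range n, e k * (p k).eval y) ^ 2
        ≤ (∑ k ∈ Finset.range n, e k * e k) * B := hCS
      _ ≤ (A - As) * B := mul_le_mul_of_nonneg_right heA hB.le
  have habs : |kern p n x y - kern ps n x y| ≤ Real.sqrt ((A - As) * B) := by
    rw [← Real.sqrt_sq_eq_abs]
    exact Real.sqrt_le_sqrt hq2
  have e1 : (1/A)/(1/B) = B/A := by
    field_simp
  have e2 : (1:ℝ) - (1/A)/(1/As) = (A - As)/A := by
    field_simp
  rw [e1, e2]
  have hrhs : Real.sqrt (B/A) * Real.sqrt ((A - As)/A) = Real.sqrt ((A - As) * B) / A := by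
    rw [← Real.sqrt_mul (by positivity)]
    have : B/A * ((A - As)/A) = ((A - As) * B) / (A * A) := by ring
    rw [this, Real.sqrt_div (by nlinarith), Real.sqrt_mul_self hA.le]
  rw [hrhs]
  gcongr
end

section
/- Let μ be a finite positive Borel measure on [-1,1] and let w be a bounded measurable function with w ≥ dμ/dx in an interval I and dμ* = μ outside I, dμ* = w dx on I (so μ ≤ μ* with difference supported on I). Then for all x ∈ [-1,1]: ∫_{-1}^{1} (K_n(x,t) - K_n*(x,t))² dμ*(t) ≤ K_n*(x,x) - K_n(x,x) + ∫_I K_n(x,t)² d(μ* - μ)(t). -/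
open MeasureTheory Set Finset

lemma kern_continuous (p : ℕ → Polynomial ℝ) (n : ℕ) (x : ℝ) :
    Continuous (kern p n x) := by
  unfold kern
  exact continuous_finset_sum _ fun k _ => continuous_const.mul (p k).continuous_aeval

/-- `∫ K(x,t)² dν = K(x,x)` from orthonormality. -/
lemma integral_kern_sq (ν : Measure ℝ) [IsFiniteMeasure ν]
    (n : ℕ) (q : ℕ → Polynomial ℝ)
    (horth : ∀ j k, (∫ t in Icc (-1:ℝ) 1, (q j).eval t * (q k).eval t ∂ν)
        = if j = k then 1 else 0) (x : ℝ) :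
    (∫ t in Icc (-1:ℝ) 1, (kern q n x t)^2 ∂ν) = kern q n x x := by
  have hint : ∀ j k : ℕ, IntegrableOn
      (fun t => ((q j).eval x * (q j).eval t) * ((q k).eval x * (q k).eval t))
      (Icc (-1:ℝ) 1) ν := fun j k =>
    (((continuous_const.mul (q j).continuous_aeval)).mul
      ((continuous_const.mul (q k).continuous_aeval))).integrableOn_Icc
  have : ∀ t : ℝ, (kern q n x t)^2 = ∑ j ∈ Finset.range n, ∑ k ∈ Finset.range n,
      ((q j).eval x * (q j).eval t) * ((q k).eval x * (q k).eval t) := by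
    intro t
    rw [kern, sq, Finset.sum_mul_sum]
  simp_rw [this]
  rw [integral_finset_sum _ (fun j _ => integrable_finset_sum _ (fun k _ => hint j k))]
  have : ∀ j ∈ Finset.range n,
      (∫ t in Icc (-1:ℝ) 1, ∑ k ∈ Finset.range n,
        ((q j).eval x * (q j).eval t) * ((q k).eval x * (q k).eval t) ∂ν)
      = (q j).eval x * (q j).eval x := by
    intro j hj
    rw [integral_finset_sum _ (fun k _ => hint j k)]
    have : ∀ k ∈ Finset.range n,
        (∫ t in Icc (-1:ℝ) 1,
          ((q j).eval x * (q j).eval t) * ((q k).eval x * (q k).eval t) ∂ν)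
        = ((q j).eval x * (q k).eval x) * (if j = k then (1:ℝ) else 0) := by
      intro k _
      rw [← horth j k, ← integral_const_mul]
      congr 1; ext t; ring
    rw [Finset.sum_congr rfl this]
    simp [Finset.sum_ite_eq' (Finset.range n) j, hj]
  rw [Finset.sum_congr rfl this, kern]

/-- Smoothing inequality: if `μ* = μ` outside `I`, `μ* = w dx` on `I` with `w ≥ dμ/dx` on `I`
(so `μ ≤ μ*` with difference supported on `I`), then
`∫ (K_n(x,·) - K_n*(x,·))² dμ* ≤ K_n*(x,x) - K_n(x,x) + ∫_I K_n(x,·)² d(μ* - μ)`. -/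
theorem smoothing_L2_inequality
    (μ μs : Measure ℝ) [IsFiniteMeasure μ] [IsFiniteMeasure μs]
    (a b : ℝ) (hI : Icc a b ⊆ Icc (-1:ℝ) 1)
    (w : ℝ → ℝ) (hwmeas : Measurable w) (M : ℝ) (hwbd : ∀ t, |w t| ≤ M)
    (hdens : μs.restrict (Icc a b)
        = (volume.withDensity (fun t => ENNReal.ofReal (w t))).restrict (Icc a b))
    (hge : ∀ᵐ t ∂(volume.restrict (Icc a b)),
        μ.rnDeriv volume t ≤ ENNReal.ofReal (w t))
    (hout : ∀ s : Set ℝ, MeasurableSet s → s ∩ Icc a b = ∅ → μs s = μ s)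
    (hle : μ ≤ μs)
    (n : ℕ) (p ps : ℕ → Polynomial ℝ)
    (hdeg : ∀ k, (p k).natDegree = k) (hdegs : ∀ k, (ps k).natDegree = k)
    (horth : ∀ j k, (∫ t in Icc (-1:ℝ) 1, (p j).eval t * (p k).eval t ∂μ)
        = if j = k then 1 else 0)
    (horths : ∀ j k, (∫ t in Icc (-1:ℝ) 1, (ps j).eval t * (ps k).eval t ∂μs)
        = if j = k then 1 else 0)
    (x : ℝ) (hx : x ∈ Icc (-1:ℝ) 1) :
    (∫ t in Icc (-1:ℝ) 1, (kern p n x t - kern ps n x t)^2 ∂μs)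
      ≤ kern ps n x x - kern p n x x
        + ((∫ t in Icc a b, (kern p n x t)^2 ∂μs) - ∫ t in Icc a b, (kern p n x t)^2 ∂μ) := by
  have hKc : Continuous (kern p n x) := kern_continuous p n x
  have hKsc : Continuous (kern ps n x) := kern_continuous ps n x
  -- ps k are nonzero
  have hpsne : ∀ k, ps k ≠ 0 := by
    intro k hk
    have := horths k k
    simp [hk] at this
  -- reproducing property for basis elements
  have L2 : ∀ m, m < n →
      (∫ t in Icc (-1:ℝ) 1, kern ps n x t * (ps m).eval t ∂μs) = (ps m).eval x := by
    intro m hm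
    have hint : ∀ k : ℕ, IntegrableOn
        (fun t => ((ps k).eval x * (ps k).eval t) * (ps m).eval t) (Icc (-1:ℝ) 1) μs :=
      fun k => ((continuous_const.mul (ps k).continuous_aeval).mul
        (ps m).continuous_aeval).integrableOn_Icc
    have : ∀ t : ℝ, kern ps n x t * (ps m).eval t
        = ∑ k ∈ Finset.range n, ((ps k).eval x * (ps k).eval t) * (ps m).eval t := by
      intro t; rw [kern, Finset.sum_mul]
    simp_rw [this]
    rw [integral_finset_sum _ (fun k _ => hint k)]
    have : ∀ k ∈ Finset.range n,
        (∫ t in Icc (-1:ℝ) 1, ((ps k).eval x * (ps k).eval t) * (ps m).eval t ∂μs)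
        = (ps k).eval x * (if k = m then (1:ℝ) else 0) := by
      intro k _
      rw [← horths k m, ← integral_const_mul]
      congr 1; ext t; ring
    rw [Finset.sum_congr rfl this]
    simp [Finset.sum_ite_eq' (Finset.range n) m, Finset.mem_range.mpr hm]
  -- reproducing property for all polynomials of degree < n
  have L3 : ∀ m, ∀ q : Polynomial ℝ, q.natDegree < m → m ≤ n →
      (∫ t in Icc (-1:ℝ) 1, kern ps n x t * q.eval t ∂μs) = q.eval x := by
    intro m
    induction m with
    | zero => intro q hq; omega
    | succ m ih =>
      intro q hq hmn
      by_cases hq0 : q = 0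
      · simp [hq0]
      by_cases hqm : q.natDegree < m
      · exact ih q hqm (le_of_lt hmn)
      have hqdeg : q.natDegree = m := by omega
      set c : ℝ := q.leadingCoeff / (ps m).leadingCoeff with hc
      set r : Polynomial ℝ := q - c • ps m with hr
      have hcne : (ps m).leadingCoeff ≠ 0 := Polynomial.leadingCoeff_ne_zero.mpr (hpsne m)
      have hc0 : c ≠ 0 := div_ne_zero (Polynomial.leadingCoeff_ne_zero.mpr hq0) hcne
      have hdegcq : (c • ps m).degree = q.degree := by
        rw [Polynomial.smul_eq_C_mul, Polynomial.degree_C_mul hc0,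
          Polynomial.degree_eq_natDegree (hpsne m), Polynomial.degree_eq_natDegree hq0,
          hdegs m, hqdeg]
      have hlc : (c • ps m).leadingCoeff = q.leadingCoeff := by
        rw [Polynomial.smul_eq_C_mul, Polynomial.leadingCoeff_mul, Polynomial.leadingCoeff_C, hc]
        field_simp
      have hIr : (∫ t in Icc (-1:ℝ) 1, kern ps n x t * r.eval t ∂μs) = r.eval x := by
        by_cases hr0 : r = 0
        · simp [hr0]
        · apply ih r _ (le_of_lt hmn)
          have := Polynomial.degree_sub_lt hdegcq.symm hq0 hlc.symm
          rw [← hr] at this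
          have h2 : r.degree < (m : ℕ) := by
            rw [Polynomial.degree_eq_natDegree hq0, hqdeg] at this; exact_mod_cast this
          exact (Polynomial.natDegree_lt_iff_degree_lt hr0).mpr (by exact_mod_cast h2)
      have hqeq : q = r + c • ps m := by rw [hr]; ring
      have hint1 : IntegrableOn (fun t => kern ps n x t * r.eval t) (Icc (-1:ℝ) 1) μs :=
        (hKsc.mul r.continuous_aeval).integrableOn_Icc
      have hint2 : IntegrableOn (fun t => kern ps n x t * (c • ps m).eval t)
          (Icc (-1:ℝ) 1) μs :=
        (hKsc.mul (c • ps m).continuous_aeval).integrableOn_Icc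
      calc (∫ t in Icc (-1:ℝ) 1, kern ps n x t * q.eval t ∂μs)
          = ∫ t in Icc (-1:ℝ) 1,
              (kern ps n x t * r.eval t + kern ps n x t * (c • ps m).eval t) ∂μs := by
            congr 1; ext t; rw [hqeq]; simp [Polynomial.eval_add]; ring
        _ = (∫ t in Icc (-1:ℝ) 1, kern ps n x t * r.eval t ∂μs)
              + ∫ t in Icc (-1:ℝ) 1, kern ps n x t * (c • ps m).eval t ∂μs :=
            integral_add hint1 hint2
        _ = r.eval x + c * (ps m).eval x := by
            rw [hIr]
            congr 1
            have : (∫ t in Icc (-1:ℝ) 1, kern ps n x t * (c • ps m).eval t ∂μs)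
                = c * ∫ t in Icc (-1:ℝ) 1, kern ps n x t * (ps m).eval t ∂μs := by
              rw [← integral_const_mul]; congr 1; ext t; simp; ring
            rw [this, L2 m (lt_of_lt_of_le (Nat.lt_succ_self m) hmn)]
        _ = q.eval x := by rw [hqeq]; simp
  -- cross term
  have hcross : (∫ t in Icc (-1:ℝ) 1, kern p n x t * kern ps n x t ∂μs)
      = kern p n x x := by
    have hint : ∀ j : ℕ, IntegrableOn
        (fun t => ((p j).eval x * (p j).eval t) * kern ps n x t) (Icc (-1:ℝ) 1) μs :=
      fun j => ((continuous_const.mul (p j).continuous_aeval).mul hKsc).integrableOn_Icc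
    have h1 : ∀ t : ℝ, kern p n x t * kern ps n x t
        = ∑ j ∈ Finset.range n, ((p j).eval x * (p j).eval t) * kern ps n x t := by
      intro t
      rw [kern, Finset.sum_mul]
    simp_rw [h1]
    rw [integral_finset_sum _ (fun j _ => hint j)]
    have h2 : ∀ j ∈ Finset.range n,
        (∫ t in Icc (-1:ℝ) 1, ((p j).eval x * (p j).eval t) * kern ps n x t ∂μs)
        = (p j).eval x * (p j).eval x := by
      intro j hj
      have : (∫ t in Icc (-1:ℝ) 1, ((p j).eval x * (p j).eval t) * kern ps n x t ∂μs)
          = (p j).eval x * ∫ t in Icc (-1:ℝ) 1, kern ps n x t * (p j).eval t ∂μs := by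
        rw [← integral_const_mul]; congr 1; ext t; ring
      rw [this, L3 n (p j) (by rw [hdeg j]; exact Finset.mem_range.mp hj) le_rfl]
    rw [Finset.sum_congr rfl h2, kern]
  -- diagonal terms
  have hdiagp : (∫ t in Icc (-1:ℝ) 1, (kern p n x t)^2 ∂μ) = kern p n x x :=
    integral_kern_sq μ n p horth x
  have hdiagps : (∫ t in Icc (-1:ℝ) 1, (kern ps n x t)^2 ∂μs) = kern ps n x x :=
    integral_kern_sq μs n ps horths x
  -- splitting the integral of K² over μs vs μ
  have hsplit : (∫ t in Icc (-1:ℝ) 1, (kern p n x t)^2 ∂μs)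
      = kern p n x x
        + ((∫ t in Icc a b, (kern p n x t)^2 ∂μs)
          - ∫ t in Icc a b, (kern p n x t)^2 ∂μ) := by
    have hD : MeasurableSet (Icc (-1:ℝ) 1 \ Icc a b) :=
      measurableSet_Icc.diff measurableSet_Icc
    have hrestr : μs.restrict (Icc (-1:ℝ) 1 \ Icc a b)
        = μ.restrict (Icc (-1:ℝ) 1 \ Icc a b) := by
      ext s hs
      rw [Measure.restrict_apply hs, Measure.restrict_apply hs]
      apply hout _ (hs.inter hD)
      ext t
      simp only [Set.mem_inter_iff, Set.mem_diff, Set.mem_empty_iff_false, iff_false]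
      tauto
    have hunion : ∀ (ν : Measure ℝ), IntegrableOn (fun t => (kern p n x t)^2)
          (Icc (-1:ℝ) 1) ν →
        (∫ t in Icc (-1:ℝ) 1, (kern p n x t)^2 ∂ν)
          = (∫ t in Icc (-1:ℝ) 1 \ Icc a b, (kern p n x t)^2 ∂ν)
            + ∫ t in Icc a b, (kern p n x t)^2 ∂ν := by
      intro ν hintν
      rw [← setIntegral_union (Set.disjoint_sdiff_left) measurableSet_Icc
        (hintν.mono_set Set.diff_subset) (hintν.mono_set hI),
        Set.diff_union_of_subset hI]
    have heqD : (∫ t in Icc (-1:ℝ) 1 \ Icc a b, (kern p n x t)^2 ∂μs)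
        = ∫ t in Icc (-1:ℝ) 1 \ Icc a b, (kern p n x t)^2 ∂μ := by
      rw [show (∫ t in Icc (-1:ℝ) 1 \ Icc a b, (kern p n x t)^2 ∂μs)
          = ∫ t, (kern p n x t)^2 ∂(μs.restrict (Icc (-1:ℝ) 1 \ Icc a b)) from rfl, hrestr]
    have h4 := hunion μ ((hKc.pow 2).integrableOn_Icc)
    rw [hdiagp] at h4
    rw [hunion μs ((hKc.pow 2).integrableOn_Icc), heqD]
    linarith
  -- expand the square
  have hexp : (∫ t in Icc (-1:ℝ) 1, (kern p n x t - kern ps n x t)^2 ∂μs)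
      = (∫ t in Icc (-1:ℝ) 1, (kern p n x t)^2 ∂μs)
        - 2 * (∫ t in Icc (-1:ℝ) 1, kern p n x t * kern ps n x t ∂μs)
        + ∫ t in Icc (-1:ℝ) 1, (kern ps n x t)^2 ∂μs := by
    have h1 : IntegrableOn (fun t => (kern p n x t)^2) (Icc (-1:ℝ) 1) μs :=
      (hKc.pow 2).integrableOn_Icc
    have h2 : IntegrableOn (fun t => kern p n x t * kern ps n x t) (Icc (-1:ℝ) 1) μs :=
      (hKc.mul hKsc).integrableOn_Icc
    have h3 : IntegrableOn (fun t => (kern ps n x t)^2) (Icc (-1:ℝ) 1) μs :=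
      (hKsc.pow 2).integrableOn_Icc
    have : ∀ t : ℝ, (kern p n x t - kern ps n x t)^2
        = (kern p n x t)^2 - 2 * (kern p n x t * kern ps n x t) + (kern ps n x t)^2 := by
      intro t; ring
    simp_rw [this]
    have h2' : IntegrableOn (fun t => 2 * (kern p n x t * kern ps n x t))
        (Icc (-1:ℝ) 1) μs := h2.const_mul 2
    have h12 : IntegrableOn
        (fun t => (kern p n x t)^2 - 2 * (kern p n x t * kern ps n x t))
        (Icc (-1:ℝ) 1) μs := h1.sub h2'
    rw [integral_add h12 h3, integral_sub h1 h2', integral_const_mul]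
  rw [hexp, hcross, hdiagps, hsplit]
  ring_nf
  exact le_refl _
end

section
/- Let w* and w be measurable weights on [-1,1] with (1+ε)^{-1} ≤ w/w* ≤ 1+ε pointwise on [-1,1] for some ε ∈ (0, 1/2), and let K_n, K_n* be the reproducing kernels of w dx and w* dx respectively. Then for all x, y ∈ [-1,1], |K_n(x,y) - K_n*(x,y)|/K_n*(x,x) ≤ √(2ε) · (K_n*(y,y)/K_n*(x,x))^{1/2}. -/
open MeasureTheory Set Finset

/-!
Write `K_x = ∑_{k<n} p_k(x) p_k` and `K*_x` for the kernel polynomials of `w` and `w*`. The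
reproducing property gives `∫ (K_x - K*_x)² w* = ∫ K_x² w* - 2 K(x,x) + K*(x,x)
≤ K*(x,x) - (1 - ε) K(x,x)`, and Cauchy–Schwarz in orthonormal coordinates gives
`P(y)² ≤ K*(y,y) ∫ P² w*` whenever `deg P < n`. Applied to `P = K*_x` and the weight `w`, the
latter compares the Christoffel functions, `K*(x,x) ≤ (1 + ε) K(x,x)`, which bounds the integral
by `2ε K*(x,x)`; applied to `P = K_x - K*_x` at `y` it gives the claim.
-/

open Polynomial

noncomputable def weightedInner (s : Set ℝ) (v : ℝ → ℝ) (f g : ℝ[X]) : ℝ :=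
  ∫ t in s, f.eval t * g.eval t * v t

noncomputable def kernelPoly (q : ℕ → ℝ[X]) (n : ℕ) (x : ℝ) : ℝ[X] :=
  ∑ k ∈ range n, (q k).eval x • q k

structure IsOrthonormalSeq (s : Set ℝ) (v : ℝ → ℝ) (q : ℕ → ℝ[X]) : Prop where
  natDegree_eq : ∀ k, (q k).natDegree = k
  weightedInner_eq : ∀ j k, weightedInner s v (q j) (q k) = if j = k then 1 else 0

lemma kern_self_nonneg (q : ℕ → ℝ[X]) (n : ℕ) (x : ℝ) : 0 ≤ kern q n x x :=
  sum_nonneg fun _ _ => mul_self_nonneg _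

lemma eval_kernelPoly (q : ℕ → ℝ[X]) (n : ℕ) (x y : ℝ) :
    (kernelPoly q n x).eval y = kern q n x y := by
  simp only [kernelPoly, kern, eval_finsetSum, eval_smul, smul_eq_mul]

lemma kernelPoly_mem_degreeLT {q : ℕ → ℝ[X]} (hq : ∀ k, (q k).natDegree ≤ k) (n : ℕ)
    (x : ℝ) : kernelPoly q n x ∈ degreeLT ℝ n :=
  sum_mem fun k hk => Submodule.smul_mem _ _ <| mem_degreeLT.2 <|
    degree_le_natDegree.trans_lt <| by exact_mod_cast (hq k).trans_lt (mem_range.1 hk)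

section weightedInner

variable {s : Set ℝ} {u v : ℝ → ℝ}

lemma integrableOn_eval_mul_eval_mul (hs : IsCompact s) (hv : IntegrableOn v s) (f g : ℝ[X]) :
    IntegrableOn (fun t => f.eval t * g.eval t * v t) s :=
  hv.continuousOn_mul (f.continuous.mul g.continuous).continuousOn hs

lemma weightedInner_comm (f g : ℝ[X]) : weightedInner s v f g = weightedInner s v g f := by
  simp only [weightedInner, mul_comm (f.eval _)]

lemma weightedInner_sum_smul_left (hs : IsCompact s) (hv : IntegrableOn v s) (c : ℕ → ℝ)
    (q : ℕ → ℝ[X]) (n : ℕ) (g : ℝ[X]) :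
    weightedInner s v (∑ k ∈ range n, c k • q k) g
      = ∑ k ∈ range n, c k * weightedInner s v (q k) g := by
  simp only [weightedInner, eval_finsetSum, eval_smul, smul_eq_mul, sum_mul, mul_assoc]
  rw [integral_finsetSum _ fun k _ => ?_]
  · simp only [integral_const_mul]
  · simpa only [mul_assoc] using (integrableOn_eval_mul_eval_mul hs hv (q k) g).const_mul (c k)

lemma weightedInner_sub_sub (hs : IsCompact s) (hv : IntegrableOn v s) (f g : ℝ[X]) :
    weightedInner s v (f - g) (f - g)
      = weightedInner s v f f - 2 * weightedInner s v g f + weightedInner s v g g := by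
  have hfg := integrableOn_eval_mul_eval_mul hs hv
  simp only [weightedInner, eval_sub]
  calc ∫ t in s, (f.eval t - g.eval t) * (f.eval t - g.eval t) * v t
      = ∫ t in s, (f.eval t * f.eval t * v t - 2 * (g.eval t * f.eval t * v t))
          + g.eval t * g.eval t * v t := by
        congr 1 with t
        ring
    _ = _ := by
      rw [integral_add, integral_sub, integral_const_mul]
      exacts [hfg f f, (hfg g f).const_mul 2, (hfg f f).sub ((hfg g f).const_mul 2), hfg g g]

lemma weightedInner_self_le_of_le_mul (hs : IsCompact s) (hu : IntegrableOn u s)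
    (hv : IntegrableOn v s) {c : ℝ} (h : ∀ t ∈ s, u t ≤ c * v t) (f : ℝ[X]) :
    weightedInner s u f f ≤ c * weightedInner s v f f := by
  rw [weightedInner, weightedInner, ← integral_const_mul]
  refine setIntegral_mono_on (integrableOn_eval_mul_eval_mul hs hu f f)
    ((integrableOn_eval_mul_eval_mul hs hv f f).const_mul c) hs.measurableSet fun t ht => ?_
  nlinarith [h t ht, mul_self_nonneg (f.eval t)]

end weightedInner

namespace IsOrthonormalSeq

variable {s : Set ℝ} {v : ℝ → ℝ} {q : ℕ → ℝ[X]} {n : ℕ}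

lemma ne_zero (hq : IsOrthonormalSeq s v q) (k : ℕ) : q k ≠ 0 := fun h => by
  simpa [weightedInner, h] using hq.weightedInner_eq k k

lemma integrableOn (hq : IsOrthonormalSeq s v q) : IntegrableOn v s := by
  obtain ⟨c, hc⟩ : ∃ c, q 0 = C c := ⟨_, eq_C_of_natDegree_eq_zero (hq.natDegree_eq 0)⟩
  have hc0 : c ≠ 0 := by simpa [hc] using hq.ne_zero 0
  have h1 : ∫ t in s, c * c * v t = 1 := by
    simpa [weightedInner, hc] using hq.weightedInner_eq 0 0
  have hint : IntegrableOn (fun t => c * c * v t) s :=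
    Integrable.of_integral_ne_zero (by rw [h1]; exact one_ne_zero)
  exact (integrable_const_mul_iff (mul_ne_zero hc0 hc0).isUnit v).1 hint

lemma kernelPoly_mem_degreeLT (hq : IsOrthonormalSeq s v q) (n : ℕ) (x : ℝ) :
    kernelPoly q n x ∈ degreeLT ℝ n :=
  _root_.kernelPoly_mem_degreeLT (fun k => (hq.natDegree_eq k).le) n x

lemma exists_sum_smul_eq (hq : IsOrthonormalSeq s v q) {f : ℝ[X]} (hf : f ∈ degreeLT ℝ n) :
    ∃ c : ℕ → ℝ, ∑ k ∈ range n, c k • q k = f := by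
  let S : Sequence ℝ :=
    ⟨q, fun k => by rw [degree_eq_natDegree (hq.ne_zero k), hq.natDegree_eq]⟩
  rwa [← S.span_degreeLT fun k _ => (leadingCoeff_ne_zero.2 (hq.ne_zero k)).isUnit,
    show Set.Iio n = (Finset.range n : Set ℕ) by simp,
    Submodule.mem_span_image_finset_iff_exists_fun'] at hf

lemma weightedInner_sum_smul_sum_smul (hq : IsOrthonormalSeq s v q) (hs : IsCompact s)
    (c d : ℕ → ℝ) :
    weightedInner s v (∑ k ∈ range n, c k • q k) (∑ k ∈ range n, d k • q k)
      = ∑ k ∈ range n, c k * d k := by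
  rw [weightedInner_sum_smul_left hs hq.integrableOn]
  refine sum_congr rfl fun k hk => ?_
  rw [weightedInner_comm, weightedInner_sum_smul_left hs hq.integrableOn]
  simp [hq.weightedInner_eq, hk]

lemma weightedInner_kernelPoly (hq : IsOrthonormalSeq s v q) (hs : IsCompact s) {f : ℝ[X]}
    (hf : f ∈ degreeLT ℝ n) (x : ℝ) : weightedInner s v (kernelPoly q n x) f = f.eval x := by
  obtain ⟨c, rfl⟩ := hq.exists_sum_smul_eq hf
  rw [kernelPoly, hq.weightedInner_sum_smul_sum_smul hs]
  simp only [eval_finsetSum, eval_smul, smul_eq_mul, mul_comm]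

lemma weightedInner_kernelPoly_self (hq : IsOrthonormalSeq s v q) (hs : IsCompact s) (x : ℝ) :
    weightedInner s v (kernelPoly q n x) (kernelPoly q n x) = kern q n x x := by
  rw [hq.weightedInner_kernelPoly hs (hq.kernelPoly_mem_degreeLT n x), eval_kernelPoly]

lemma eval_sq_le (hq : IsOrthonormalSeq s v q) (hs : IsCompact s) {f : ℝ[X]}
    (hf : f ∈ degreeLT ℝ n) (y : ℝ) :
    f.eval y ^ 2 ≤ kern q n y y * weightedInner s v f f := by
  obtain ⟨c, rfl⟩ := hq.exists_sum_smul_eq hf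
  rw [hq.weightedInner_sum_smul_sum_smul hs]
  simpa only [kern, eval_finsetSum, eval_smul, smul_eq_mul, sq, mul_comm (c _)] using
    sum_mul_sq_le_sq_mul_sq (range n) (fun k => (q k).eval y) c

end IsOrthonormalSeq

section Comparison

variable {s : Set ℝ} {u v : ℝ → ℝ} {p q : ℕ → ℝ[X]} {n : ℕ}

theorem kern_self_le_mul_of_le_mul (hs : IsCompact s) (hp : IsOrthonormalSeq s v p)
    (hq : IsOrthonormalSeq s u q) {c : ℝ} (hc : 0 ≤ c) (h : ∀ t ∈ s, v t ≤ c * u t)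
    (x : ℝ) : kern q n x x ≤ c * kern p n x x := by
  set K := kernelPoly q n x
  have hsq : kern q n x x ^ 2 ≤ kern p n x x * (c * kern q n x x) :=
    calc kern q n x x ^ 2 = K.eval x ^ 2 := by rw [eval_kernelPoly]
      _ ≤ kern p n x x * weightedInner s v K K :=
        hp.eval_sq_le hs (hq.kernelPoly_mem_degreeLT n x) x
      _ ≤ kern p n x x * (c * weightedInner s u K K) :=
        mul_le_mul_of_nonneg_left
          (weightedInner_self_le_of_le_mul hs hp.integrableOn hq.integrableOn h K)
          (kern_self_nonneg p n x)
      _ = kern p n x x * (c * kern q n x x) := by rw [hq.weightedInner_kernelPoly_self hs]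
  nlinarith [kern_self_nonneg p n x, kern_self_nonneg q n x, mul_nonneg hc (kern_self_nonneg p n x)]

theorem weightedInner_kernelPoly_sub_le (hs : IsCompact s) (hp : IsOrthonormalSeq s v p)
    (hq : IsOrthonormalSeq s u q) {c : ℝ} (h : ∀ t ∈ s, u t ≤ c * v t) (x : ℝ) :
    weightedInner s u (kernelPoly p n x - kernelPoly q n x) (kernelPoly p n x - kernelPoly q n x)
      ≤ kern q n x x - (2 - c) * kern p n x x := by
  rw [weightedInner_sub_sub hs hq.integrableOn,
    hq.weightedInner_kernelPoly hs (hp.kernelPoly_mem_degreeLT n x), eval_kernelPoly,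
    hq.weightedInner_kernelPoly_self hs]
  have hcompare := weightedInner_self_le_of_le_mul hs hq.integrableOn hp.integrableOn h
    (kernelPoly p n x)
  rw [hp.weightedInner_kernelPoly_self hs] at hcompare
  linarith

end Comparison

lemma abs_div_le_sqrt_mul_sqrt_div {a b c d : ℝ} (ha : 0 ≤ a) (hb : 0 ≤ b) (hc : 0 ≤ c)
    (h : d ^ 2 ≤ a * (b * c)) : |d| / c ≤ √a * √(b / c) := by
  rcases hc.eq_or_lt with rfl | hc
  · simp
  rw [div_le_iff₀ hc]
  calc |d| ≤ √(a * (b * c)) := Real.abs_le_sqrt h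
    _ = √a * √(b / c) * c := by
      rw [show b * c = b / c * c ^ 2 by field_simp, Real.sqrt_mul ha,
        Real.sqrt_mul (div_nonneg hb hc.le), Real.sqrt_sq hc.le, mul_assoc]

theorem smoothing_kernel_inequality_general
    (w ws : ℝ → ℝ)
    (hwspos : ∀ t ∈ Icc (-1:ℝ) 1, 0 < ws t)
    (ε : ℝ) (hε : ε ∈ Ioo (0:ℝ) (1/2))
    (hratio : ∀ t ∈ Icc (-1:ℝ) 1, (1 + ε)⁻¹ ≤ w t / ws t ∧ w t / ws t ≤ 1 + ε)
    (n : ℕ) (p ps : ℕ → Polynomial ℝ)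
    (hdeg : ∀ k, (p k).natDegree = k) (hdegs : ∀ k, (ps k).natDegree = k)
    (horth : ∀ j k, (∫ t in Icc (-1:ℝ) 1, (p j).eval t * (p k).eval t * w t)
        = if j = k then 1 else 0)
    (horths : ∀ j k, (∫ t in Icc (-1:ℝ) 1, (ps j).eval t * (ps k).eval t * ws t)
        = if j = k then 1 else 0)
    (x y : ℝ) :
    |kern p n x y - kern ps n x y| / kern ps n x x ≤
      Real.sqrt (2 * ε) * Real.sqrt (kern ps n y y / kern ps n x x) := by
  obtain ⟨hε0, hε1⟩ := hε
  have hp : IsOrthonormalSeq (Icc (-1) 1) w p := ⟨hdeg, horth⟩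
  have hps : IsOrthonormalSeq (Icc (-1) 1) ws ps := ⟨hdegs, horths⟩
  have hw_le (t) (ht : t ∈ Icc (-1:ℝ) 1) : w t ≤ (1 + ε) * ws t :=
    (div_le_iff₀ (hwspos t ht)).1 (hratio t ht).2
  have hws_le (t) (ht : t ∈ Icc (-1:ℝ) 1) : ws t ≤ (1 + ε) * w t :=
    (inv_mul_le_iff₀ (by linarith)).1 ((le_div_iff₀ (hwspos t ht)).1 (hratio t ht).1)
  have hchristoffel :=
    kern_self_le_mul_of_le_mul isCompact_Icc hp hps (by linarith) hw_le x (n := n)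
  have hdiff := weightedInner_kernelPoly_sub_le isCompact_Icc hp hps hws_le x (n := n)
  have heval := hps.eval_sq_le isCompact_Icc
    (sub_mem (hp.kernelPoly_mem_degreeLT n x) (hps.kernelPoly_mem_degreeLT n x)) y
  rw [eval_sub, eval_kernelPoly, eval_kernelPoly] at heval
  -- `K*(x,x) - (1 - ε) K(x,x) ≤ 2ε K*(x,x)` since `K*(x,x) ≤ (1 + ε) K(x,x)` and `ε < 1/2`
  have hbound : weightedInner (Icc (-1) 1) ws (kernelPoly p n x - kernelPoly ps n x)
      (kernelPoly p n x - kernelPoly ps n x) ≤ 2 * ε * kern ps n x x := by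
    nlinarith [mul_le_mul_of_nonneg_left hchristoffel (by linarith : (0:ℝ) ≤ 1 - 2 * ε),
      mul_nonneg (sq_nonneg ε) (kern_self_nonneg p n x)]
  refine abs_div_le_sqrt_mul_sqrt_div (by linarith) (kern_self_nonneg ps n y)
    (kern_self_nonneg ps n x) ?_
  calc _ ≤ kern ps n y y * (2 * ε * kern ps n x x) :=
        heval.trans (mul_le_mul_of_nonneg_left hbound (kern_self_nonneg ps n y))
    _ = 2 * ε * (kern ps n y y * kern ps n x x) := by ring

/-- If the weights `w` and `w*` satisfy `(1+ε)⁻¹ ≤ w/w* ≤ 1+ε` on `[-1,1]`, then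
`|K_n(x,y) - K_n*(x,y)|/K_n*(x,x) ≤ √(2ε) (K_n*(y,y)/K_n*(x,x))^{1/2}`. -/
theorem smoothing_kernel_inequality
    (w ws : ℝ → ℝ) (hwmeas : Measurable w) (hwsmeas : Measurable ws)
    (hwspos : ∀ t ∈ Icc (-1:ℝ) 1, 0 < ws t)
    (ε : ℝ) (hε : ε ∈ Ioo (0:ℝ) (1/2))
    (hratio : ∀ t ∈ Icc (-1:ℝ) 1, (1 + ε)⁻¹ ≤ w t / ws t ∧ w t / ws t ≤ 1 + ε)
    (n : ℕ) (p ps : ℕ → Polynomial ℝ)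
    (hdeg : ∀ k, (p k).natDegree = k) (hdegs : ∀ k, (ps k).natDegree = k)
    (horth : ∀ j k, (∫ t in Icc (-1:ℝ) 1, (p j).eval t * (p k).eval t * w t)
        = if j = k then 1 else 0)
    (horths : ∀ j k, (∫ t in Icc (-1:ℝ) 1, (ps j).eval t * (ps k).eval t * ws t)
        = if j = k then 1 else 0)
    (x y : ℝ) (hx : x ∈ Icc (-1:ℝ) 1) (hy : y ∈ Icc (-1:ℝ) 1) :
    |kern p n x y - kern ps n x y| / kern ps n x x ≤
      Real.sqrt (2 * ε) * Real.sqrt (kern ps n y y / kern ps n x x) :=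
  smoothing_kernel_inequality_general w ws hwspos ε hε hratio n p ps hdeg hdegs horth horths x y
end
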